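/- arXiv:1812.11155 — 3 statements merged into one kernel-verified Lean document; each statement's English description precedes it below -/
import Mathlib

section
/- For a positively oriented nondegenerate triangle with circumcenter c, the DEC Hodge ratio of the edge [v₁,v₂] equals half the cotangent of the opposite angle: t₁ := 2·det(v₂−v₁, c−v₁)/‖v₂−v₁‖² = cot(γ) = cos(γ)/sin(γ), where γ is the interior angle at v₃ (equivalently, the signed quotient l₁/L₁ appearing in the DEC Hodge star equals tan(α₁)/2 with α₁ = π/2 − γ). -/
/-!
Write `u = v₂ - v₃`, `w = v₁ - v₃`. In the plane, `⟪u, w⟫ = ‖u‖‖w‖ cos γ` and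
`|det(u, w)| = ‖u‖‖w‖ sin γ`, so `cot γ = ⟪u, w⟫ / |det(u, w)|`, and `|det(u, w)|` is the
doubled area `det(v₂ - v₁, v₃ - v₁)`. On the other side, subtracting the circumcenter
equations `‖c - vᵢ‖² = ‖c - vⱼ‖²` pairwise gives two linear equations for `c`, from which
`2 det(v₂ - v₁, c - v₁) · det(v₂ - v₁, v₃ - v₁) = ⟪u, w⟫ ‖v₂ - v₁‖²`.
-/

noncomputable section

/-- Determinant of two vectors in ℝ². -/
def det2 (a b : EuclideanSpace ℝ (Fin 2)) : ℝ := a 0 * b 1 - a 1 * b 0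

open scoped RealInnerProductSpace

open InnerProductGeometry

section Coordinates

variable (u w : EuclideanSpace ℝ (Fin 2))

lemma EuclideanSpace.inner_fin_two : ⟪u, w⟫ = u 0 * w 0 + u 1 * w 1 := by
  simp only [PiLp.inner_apply, Fin.sum_univ_two, RCLike.inner_apply, conj_trivial]
  ring

lemma EuclideanSpace.norm_sq_fin_two : ‖u‖ ^ 2 = u 0 ^ 2 + u 1 ^ 2 := by
  rw [← real_inner_self_eq_norm_sq, EuclideanSpace.inner_fin_two]
  ring

lemma det2_sq_add_inner_sq : det2 u w ^ 2 + ⟪u, w⟫ ^ 2 = ‖u‖ ^ 2 * ‖w‖ ^ 2 := by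
  simp only [det2, EuclideanSpace.inner_fin_two, EuclideanSpace.norm_sq_fin_two]
  ring

lemma det2_swap : det2 w u = -det2 u w := by
  simp only [det2]
  ring

lemma det2_sub_sub_rotate (a b c : EuclideanSpace ℝ (Fin 2)) :
    det2 (b - a) (c - a) = det2 (a - c) (b - c) := by
  simp only [det2, PiLp.sub_apply]
  ring

end Coordinates

lemma sin_angle_mul_norm_mul_norm_eq_abs_det2 (u w : EuclideanSpace ℝ (Fin 2)) :
    Real.sin (angle u w) * (‖u‖ * ‖w‖) = |det2 u w| := by
  rw [sin_angle_mul_norm_mul_norm, real_inner_self_eq_norm_sq, real_inner_self_eq_norm_sq,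
    ← det2_sq_add_inner_sq]
  ring_nf
  exact Real.sqrt_sq_eq_abs _

/-- Both sides vanish, by the convention `x / 0 = 0`, when `u` and `w` are parallel. -/
lemma cos_angle_div_sin_angle_eq_inner_div_abs_det2 (u w : EuclideanSpace ℝ (Fin 2)) :
    Real.cos (angle u w) / Real.sin (angle u w) = ⟪u, w⟫ / |det2 u w| := by
  rcases eq_or_ne (‖u‖ * ‖w‖) 0 with h | h
  · rcases mul_eq_zero.mp h with hu | hw
    · simp [norm_eq_zero.mp hu]
    · simp [norm_eq_zero.mp hw]
  · rw [← mul_div_mul_right _ _ h, cos_angle_mul_norm_mul_norm,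
      sin_angle_mul_norm_mul_norm_eq_abs_det2]

lemma two_mul_det2_circumcenter_mul_det2 {v₁ v₂ v₃ c : EuclideanSpace ℝ (Fin 2)}
    (hc₁ : ‖c - v₁‖ = ‖c - v₂‖) (hc₂ : ‖c - v₂‖ = ‖c - v₃‖) :
    2 * det2 (v₂ - v₁) (c - v₁) * det2 (v₂ - v₁) (v₃ - v₁)
      = ⟪v₂ - v₃, v₁ - v₃⟫ * ‖v₂ - v₁‖ ^ 2 := by
  have E₁ := congrArg (· ^ 2) hc₁
  have E₂ := congrArg (· ^ 2) hc₂
  simp only [EuclideanSpace.norm_sq_fin_two, PiLp.sub_apply] at E₁ E₂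
  simp only [det2, EuclideanSpace.inner_fin_two, EuclideanSpace.norm_sq_fin_two, PiLp.sub_apply]
  linear_combination
    ((v₂ 0 - v₁ 0) ^ 2 + (v₂ 1 - v₁ 1) ^ 2
      - ((v₂ 0 - v₁ 0) * (v₃ 0 - v₁ 0) + (v₂ 1 - v₁ 1) * (v₃ 1 - v₁ 1))) * E₁
    + ((v₂ 0 - v₁ 0) ^ 2 + (v₂ 1 - v₁ 1) ^ 2) * E₂

/-- For a positively oriented nondegenerate triangle with circumcenter `c`, the DEC
Hodge ratio of the edge `[v₁,v₂]`, namely `t₁ = 2·det(v₂−v₁, c−v₁)/‖v₂−v₁‖²`,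
equals `cot(γ) = cos(γ)/sin(γ)` where `γ` is the interior angle at `v₃`
(equivalently, it equals `2·(tan(α₁)/2)` with `α₁ = π/2 − γ`). -/
theorem dec_hodge_ratio_eq_cot_opposite_angle
    (v₁ v₂ v₃ : EuclideanSpace ℝ (Fin 2))
    (hA : 0 < det2 (v₂ - v₁) (v₃ - v₁))
    (c : EuclideanSpace ℝ (Fin 2))
    (hc₁ : ‖c - v₁‖ = ‖c - v₂‖) (hc₂ : ‖c - v₂‖ = ‖c - v₃‖)
    (γ : ℝ) (hγ : γ = EuclideanGeometry.angle v₂ v₃ v₁)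
    (t₁ : ℝ) (ht₁ : t₁ = 2 * det2 (v₂ - v₁) (c - v₁) / ‖v₂ - v₁‖ ^ 2) :
    t₁ = Real.cos γ / Real.sin γ ∧
      t₁ / 2 = Real.tan (Real.pi / 2 - γ) / 2 := by
  have hv₁₂ : v₂ - v₁ ≠ 0 := fun h => by simp [det2, h] at hA
  have hdet : |det2 (v₂ - v₃) (v₁ - v₃)| = det2 (v₂ - v₁) (v₃ - v₁) := by
    rw [det2_swap, abs_neg, ← det2_sub_sub_rotate v₁ v₂ v₃, abs_of_pos hA]
  have hcot : t₁ = Real.cos γ / Real.sin γ := by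
    rw [hγ, EuclideanGeometry.angle, vsub_eq_sub, vsub_eq_sub,
      cos_angle_div_sin_angle_eq_inner_div_abs_det2, hdet, ht₁,
      div_eq_div_iff (by positivity) hA.ne']
    exact two_mul_det2_circumcenter_mul_det2 hc₁ hc₂
  refine ⟨hcot, ?_⟩
  rw [hcot, Real.tan_pi_div_two_sub, Real.tan_eq_sin_div_cos, inv_div]
end
end

section
/- For a positively oriented nondegenerate triangle with circumcenter c and circumradius R, the signed distance from the midpoint of the edge [v₁,v₂] to the circumcenter satisfies det(v₂−v₁, c−v₁)/‖v₂−v₁‖ = R·cos(γ), where γ is the interior angle at v₃ (the DEC relation l₁ = R sin(α₁) with α₁ = π/2 − γ). -/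
/-!
With `d = v₂ - v₁`, `e = v₃ - v₁`, `p = c - v₁` and `D = det(d, e)`, the circumcenter conditions
are the linear equations `2⟪p, d⟫ = ‖d‖²`, `2⟪p, e⟫ = ‖e‖²`. The Binet–Cauchy identity for `det`
turns them into `2 D det(d, p) = ‖d‖² ⟪v₂ - v₃, v₁ - v₃⟫`, and the vanishing of the Gram determinant
of three vectors in the plane into the circumradius formula `2 D R = ‖d‖ ‖e‖ ‖d - e‖`.
Dividing the first by the second gives `det(d, p) / ‖d‖ = R ⟪v₂ - v₃, v₁ - v₃⟫ / (‖e‖ ‖d - e‖)`,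
which is `R cos γ`.
-/

noncomputable section

open RealInnerProductSpace

lemma EuclideanSpace.inner_eq_fin_two (a b : EuclideanSpace ℝ (Fin 2)) :
    ⟪a, b⟫ = a 0 * b 0 + a 1 * b 1 := by
  simp [PiLp.inner_apply, Fin.sum_univ_two, mul_comm]

lemma EuclideanSpace.norm_sq_eq_fin_two (a : EuclideanSpace ℝ (Fin 2)) :
    ‖a‖ ^ 2 = a 0 ^ 2 + a 1 ^ 2 := by
  simp [EuclideanSpace.norm_sq_eq, Fin.sum_univ_two]

lemma det2_self (a : EuclideanSpace ℝ (Fin 2)) : det2 a a = 0 := by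
  simp only [det2]; ring

lemma det2_zero_left (a : EuclideanSpace ℝ (Fin 2)) : det2 0 a = 0 := by
  simp [det2]

lemma det2_zero_right (a : EuclideanSpace ℝ (Fin 2)) : det2 a 0 = 0 := by
  simp [det2]

lemma det2_mul_det2 (a b c d : EuclideanSpace ℝ (Fin 2)) :
    det2 a b * det2 c d = ⟪a, c⟫ * ⟪b, d⟫ - ⟪a, d⟫ * ⟪b, c⟫ := by
  simp only [det2, EuclideanSpace.inner_eq_fin_two]; ring

lemma det2_sq_mul_norm_sq (d e p : EuclideanSpace ℝ (Fin 2)) :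
    det2 d e ^ 2 * ‖p‖ ^ 2 =
      ‖e‖ ^ 2 * ⟪p, d⟫ ^ 2 - 2 * ⟪d, e⟫ * ⟪p, d⟫ * ⟪p, e⟫ + ‖d‖ ^ 2 * ⟪p, e⟫ ^ 2 := by
  simp only [det2, EuclideanSpace.inner_eq_fin_two, EuclideanSpace.norm_sq_eq_fin_two]; ring

lemma two_mul_inner_eq_norm_sq_of_norm_eq_norm_sub {E : Type*} [NormedAddCommGroup E]
    [InnerProductSpace ℝ E] {p d : E} (h : ‖p‖ = ‖p - d‖) : 2 * ⟪p, d⟫ = ‖d‖ ^ 2 := by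
  have := norm_sub_sq_real p d
  rw [← h] at this
  linarith

section Circumcenter

variable {d e p : EuclideanSpace ℝ (Fin 2)}

lemma two_mul_det2_mul_det2_of_circumcenter (hd : 2 * ⟪p, d⟫ = ‖d‖ ^ 2)
    (he : 2 * ⟪p, e⟫ = ‖e‖ ^ 2) : 2 * det2 d e * det2 d p = ‖d‖ ^ 2 * ⟪d - e, -e⟫ := by
  have := det2_mul_det2 d e d p
  rw [real_inner_self_eq_norm_sq, real_inner_comm p d, real_inner_comm p e,
    real_inner_comm d e] at this
  simp only [inner_sub_left, inner_neg_right, real_inner_self_eq_norm_sq]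
  linear_combination 2 * this + ‖d‖ ^ 2 * he - ⟪d, e⟫ * hd

lemma two_mul_abs_det2_mul_norm_of_circumcenter (hd : 2 * ⟪p, d⟫ = ‖d‖ ^ 2)
    (he : 2 * ⟪p, e⟫ = ‖e‖ ^ 2) : 2 * |det2 d e| * ‖p‖ = ‖d‖ * ‖e‖ * ‖d - e‖ := by
  refine (pow_left_inj₀ (by positivity) (by positivity) two_ne_zero).mp ?_
  calc (2 * |det2 d e| * ‖p‖) ^ 2 = 4 * (det2 d e ^ 2 * ‖p‖ ^ 2) := by
        rw [mul_pow, mul_pow, sq_abs]; ring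
    _ = ‖e‖ ^ 2 * (2 * ⟪p, d⟫) ^ 2 - 2 * ⟪d, e⟫ * (2 * ⟪p, d⟫) * (2 * ⟪p, e⟫)
          + ‖d‖ ^ 2 * (2 * ⟪p, e⟫) ^ 2 := by rw [det2_sq_mul_norm_sq]; ring
    _ = (‖d‖ * ‖e‖ * ‖d - e‖) ^ 2 := by rw [hd, he, mul_pow, mul_pow, norm_sub_sq_real]; ring

end Circumcenter

/-- For a positively oriented nondegenerate triangle with circumcenter `c` and
circumradius `R`, the signed distance from the midpoint of the edge `[v₁,v₂]` to
the circumcenter satisfies `det(v₂−v₁, c−v₁)/‖v₂−v₁‖ = R·cos(γ)`, where `γ` is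
the interior angle at `v₃`. -/
theorem dec_dual_edge_length_eq_R_cos
    (v₁ v₂ v₃ : EuclideanSpace ℝ (Fin 2))
    (hA : 0 < det2 (v₂ - v₁) (v₃ - v₁))
    (c : EuclideanSpace ℝ (Fin 2))
    (hc₁ : ‖c - v₁‖ = ‖c - v₂‖) (hc₂ : ‖c - v₂‖ = ‖c - v₃‖)
    (R : ℝ) (hR : R = ‖c - v₁‖)
    (γ : ℝ) (hγ : γ = EuclideanGeometry.angle v₂ v₃ v₁) :
    det2 (v₂ - v₁) (c - v₁) / ‖v₂ - v₁‖ = R * Real.cos γ := by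
  set d := v₂ - v₁
  set e := v₃ - v₁
  set p := c - v₁
  have hd : 2 * ⟪p, d⟫ = ‖d‖ ^ 2 :=
    two_mul_inner_eq_norm_sq_of_norm_eq_norm_sub (by rwa [sub_sub_sub_cancel_right])
  have he : 2 * ⟪p, e⟫ = ‖e‖ ^ 2 :=
    two_mul_inner_eq_norm_sq_of_norm_eq_norm_sub (by rwa [sub_sub_sub_cancel_right, hc₁])
  have hdet := two_mul_det2_mul_det2_of_circumcenter hd he
  have hcircumradius := two_mul_abs_det2_mul_norm_of_circumcenter hd he
  rw [abs_of_pos hA] at hcircumradius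
  have hd₀ : d ≠ 0 := fun h ↦ hA.ne' (by rw [h, det2_zero_left])
  have he₀ : e ≠ 0 := fun h ↦ hA.ne' (by rw [h, det2_zero_right])
  have hde : d - e ≠ 0 := fun h ↦ hA.ne' (by rw [sub_eq_zero.mp h, det2_self])
  have hangle : EuclideanGeometry.angle v₂ v₃ v₁ = InnerProductGeometry.angle (d - e) (-e) := by
    rw [EuclideanGeometry.angle, sub_sub_sub_cancel_right, neg_sub, vsub_eq_sub, vsub_eq_sub]
  rw [hγ, hangle, InnerProductGeometry.cos_angle, norm_neg, hR]
  field_simp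
  refine mul_left_cancel₀ (mul_ne_zero two_ne_zero hA.ne') ?_
  linear_combination (‖d - e‖ * ‖e‖) * hdet - (‖d‖ * ⟪d - e, -e⟫) * hcircumradius
end
end

section
/- For a nondegenerate triangle with interior angles α, β, γ at v₁, v₂, v₃, the circumcenter c is expressed in the basis of edge vectors at v₁ as c = v₁ + a·(v₂−v₁) + b·(v₃−v₁) with a = cos(β)/(2 sin(γ) sin(α)) and b = cos(γ)/(2 sin(β) sin(α)). -/
/-!
With `u = v₂ - v₁` and `w = v₃ - v₁`, equidistance of `c` from the vertices is the linear system
`2⟪c - v₁, u⟫ = ‖u‖²`, `2⟪c - v₁, w⟫ = ‖w‖²`, uniquely solvable because `det2 u w ≠ 0`. By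
Lagrange's identity `det2 u w ^ 2 = ‖u‖²‖w‖² - ⟪u, w⟫²` its solution is `a • u + b • w` with
`a = ‖w‖² (‖u‖² - ⟪u, w⟫) / (2 det2 u w ^ 2)` and `b` obtained by swapping `u` and `w`.
At each vertex, sine times the two adjacent side lengths is `|det2 u w|` and cosine times them is
an inner product of edge vectors, which turns the trigonometric coefficients into the same
expressions.
-/

noncomputable section

open InnerProductGeometry RealInnerProductSpace

local notation "ℝ²" => EuclideanSpace ℝ (Fin 2)

lemma det2_swap_s16 (x y : ℝ²) : det2 y x = -det2 x y := by
  unfold det2; ring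

lemma inner_fin_two (x y : ℝ²) : ⟪x, y⟫ = x 0 * y 0 + x 1 * y 1 := by
  simp [PiLp.inner_apply, Fin.sum_univ_two, mul_comm]

lemma det2_sq (x y : ℝ²) : det2 x y ^ 2 = ‖x‖ ^ 2 * ‖y‖ ^ 2 - ⟪x, y⟫ ^ 2 := by
  simp only [← real_inner_self_eq_norm_sq, inner_fin_two, det2]; ring

lemma sin_angle_mul_norm_mul_norm_eq_abs_det2_s16 (x y : ℝ²) :
    Real.sin (angle x y) * (‖x‖ * ‖y‖) = |det2 x y| := by
  rw [sin_angle_mul_norm_mul_norm, ← Real.sqrt_sq_eq_abs, det2_sq,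
    real_inner_self_eq_norm_sq, real_inner_self_eq_norm_sq, sq ⟪x, y⟫]

lemma eq_of_inner_eq_of_det2_ne_zero {u w x y : ℝ²} (hd : det2 u w ≠ 0)
    (hu : ⟪x, u⟫ = ⟪y, u⟫) (hw : ⟪x, w⟫ = ⟪y, w⟫) : x = y := by
  rw [inner_fin_two, inner_fin_two] at hu hw
  ext i
  fin_cases i <;> simp only [Fin.zero_eta, Fin.mk_one]
  · refine mul_right_cancel₀ hd ?_
    simp only [det2]
    linear_combination w 1 * hu - u 1 * hw
  · refine mul_right_cancel₀ hd ?_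
    simp only [det2]
    linear_combination u 0 * hw - w 0 * hu

lemma two_mul_inner_eq_norm_sq_of_norm_eq_norm_sub_s16 {p u : ℝ²} (h : ‖p‖ = ‖p - u‖) :
    2 * ⟪p, u⟫ = ‖u‖ ^ 2 := by
  have := congrArg (· ^ 2) h
  simp only [norm_sub_sq_real] at this
  linarith

def circumWeight (u w : ℝ²) : ℝ := ‖w‖ ^ 2 * (‖u‖ ^ 2 - ⟪u, w⟫) / (2 * det2 u w ^ 2)

lemma two_mul_inner_circumWeight_smul_add_smul_left {u w : ℝ²} (hd : det2 u w ≠ 0) :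
    2 * ⟪circumWeight u w • u + circumWeight w u • w, u⟫ = ‖u‖ ^ 2 := by
  have hd' : det2 w u ≠ 0 := by rwa [det2_swap_s16, neg_ne_zero]
  rw [inner_add_left, inner_smul_left, inner_smul_left, real_inner_self_eq_norm_sq,
    circumWeight, circumWeight, real_inner_comm u w]
  simp only [conj_trivial]
  field_simp
  rw [det2_swap_s16, neg_sq, det2_sq]
  ring

lemma eq_circumWeight_smul_add_smul {u w p : ℝ²} (hd : det2 u w ≠ 0)
    (hu : 2 * ⟪p, u⟫ = ‖u‖ ^ 2) (hw : 2 * ⟪p, w⟫ = ‖w‖ ^ 2) :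
    p = circumWeight u w • u + circumWeight w u • w := by
  have hd' : det2 w u ≠ 0 := by rwa [det2_swap_s16, neg_ne_zero]
  refine eq_of_inner_eq_of_det2_ne_zero hd ?_ ?_
  · linarith [two_mul_inner_circumWeight_smul_add_smul_left hd]
  · linarith [add_comm (circumWeight u w • u) (circumWeight w u • w) ▸
      two_mul_inner_circumWeight_smul_add_smul_left hd']

/- `angle u w`, `angle (-u) (w - u)` and `angle (u - w) (-w)` are the angles at `v₁`, `v₁ + u`,
`v₁ + w` of the triangle with these vertices. -/
lemma cos_angle_div_two_mul_sin_mul_sin {u w : ℝ²} (hd : det2 u w ≠ 0) :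
    Real.cos (angle (-u) (w - u)) / (2 * Real.sin (angle (u - w) (-w)) * Real.sin (angle u w))
      = circumWeight u w := by
  have hu : ‖u‖ ≠ 0 := by
    rintro h; apply hd; simp [norm_eq_zero.1 h, det2]
  have hw : ‖w‖ ≠ 0 := by
    rintro h; apply hd; simp [norm_eq_zero.1 h, det2]
  have he : ‖u - w‖ ≠ 0 := by
    rintro h; apply hd; simp only [det2, sub_eq_zero.1 (norm_eq_zero.1 h)]; ring
  have hcos : Real.cos (angle (-u) (w - u)) * (‖u‖ * ‖u - w‖) = ‖u‖ ^ 2 - ⟪u, w⟫ := by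
    have h := cos_angle_mul_norm_mul_norm (-u) (w - u)
    rw [norm_neg, norm_sub_rev] at h
    rw [h, inner_neg_left, inner_sub_right, real_inner_self_eq_norm_sq]
    ring
  have hsin_u_w : Real.sin (angle u w) * (‖u‖ * ‖w‖) = |det2 u w| :=
    sin_angle_mul_norm_mul_norm_eq_abs_det2_s16 u w
  have hsin_uw_w : Real.sin (angle (u - w) (-w)) * (‖u - w‖ * ‖w‖) = |det2 u w| := by
    rw [← norm_neg w, sin_angle_mul_norm_mul_norm_eq_abs_det2_s16, ← abs_neg]
    congr 1
    simp only [det2, PiLp.sub_apply, PiLp.neg_apply]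
    ring
  rw [eq_div_of_mul_eq (by positivity) hcos, eq_div_of_mul_eq (by positivity) hsin_u_w,
    eq_div_of_mul_eq (by positivity) hsin_uw_w, circumWeight]
  have hD : |det2 u w| ≠ 0 := abs_ne_zero.2 hd
  field_simp
  rw [sq_abs]

/-- For a nondegenerate triangle with interior angles `α, β, γ` at `v₁, v₂, v₃`,
the circumcenter is `c = v₁ + a·(v₂−v₁) + b·(v₃−v₁)` with
`a = cos(β)/(2 sin(γ) sin(α))` and `b = cos(γ)/(2 sin(β) sin(α))`. -/
theorem circumcenter_barycentric_expression
    (v₁ v₂ v₃ : EuclideanSpace ℝ (Fin 2))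
    (hA : det2 (v₂ - v₁) (v₃ - v₁) ≠ 0)
    (c : EuclideanSpace ℝ (Fin 2))
    (hc₁ : ‖c - v₁‖ = ‖c - v₂‖) (hc₂ : ‖c - v₂‖ = ‖c - v₃‖)
    (α β γ : ℝ)
    (hα : α = EuclideanGeometry.angle v₂ v₁ v₃)
    (hβ : β = EuclideanGeometry.angle v₁ v₂ v₃)
    (hγ : γ = EuclideanGeometry.angle v₂ v₃ v₁) :
    c = v₁ + (Real.cos β / (2 * Real.sin γ * Real.sin α)) • (v₂ - v₁)
          + (Real.cos γ / (2 * Real.sin β * Real.sin α)) • (v₃ - v₁) := by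
  set u := v₂ - v₁
  set w := v₃ - v₁
  have hA' : det2 w u ≠ 0 := by rwa [det2_swap_s16, neg_ne_zero]
  have hα' : α = angle u w := hα
  have hβ' : β = angle (-u) (w - u) := by rw [neg_sub, sub_sub_sub_cancel_right]; exact hβ
  have hγ' : γ = angle (u - w) (-w) := by rw [neg_sub, sub_sub_sub_cancel_right]; exact hγ
  have ha := cos_angle_div_two_mul_sin_mul_sin hA
  have hb := cos_angle_div_two_mul_sin_mul_sin hA'
  rw [← hα', ← hβ', ← hγ'] at ha
  rw [angle_comm (-w), angle_comm (w - u), angle_comm w, ← hα', ← hβ', ← hγ'] at hb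
  rw [ha, hb, add_assoc, ← sub_eq_iff_eq_add']
  refine eq_circumWeight_smul_add_smul hA (two_mul_inner_eq_norm_sq_of_norm_eq_norm_sub_s16 ?_)
    (two_mul_inner_eq_norm_sq_of_norm_eq_norm_sub_s16 ?_)
  · rwa [sub_sub_sub_cancel_right]
  · rwa [sub_sub_sub_cancel_right, ← hc₂]
end
end
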